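/- For any real c and positive reals a, b, f, ∫₀^∞ ∫₀^{τ₃} ∫₀^{τ₃} (c/τ₃²) exp(-a τ₁) exp(-b τ₂) exp(-f τ₃) dτ₁ dτ₂ dτ₃ = (c/(ab)) · (f·log f − (a+f)·log(a+f) − (b+f)·log(b+f) + (a+b+f)·log(a+b+f)). -/

import Mathlib

/-!
The two inner integrals are elementary and leave
`c / (a b) · (1 - e^{-aτ})/τ · (1 - e^{-bτ})/τ · e^{-fτ}`.
Writing `(1 - e^{-aτ})/τ = ∫₀^a e^{-sτ} ds` and exchanging the order of integration turns the
`τ`-integral into `∫₀^a (log (s + b + f) - log (s + f)) ds`, the inner integral being Frullani's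
(obtained by the same exchange once more); integrating the logarithms gives the `x log x` terms.
-/

open MeasureTheory Set Real

theorem integral_exp_neg_mul {c : ℝ} (hc : c ≠ 0) (t : ℝ) :
    ∫ x in (0:ℝ)..t, exp (-c * x) = (1 - exp (-c * t)) / c := by
  rw [intervalIntegral.integral_comp_mul_left (fun x => exp x) (neg_ne_zero.2 hc),
    integral_exp]
  simp only [mul_zero, exp_zero, smul_eq_mul]
  field_simp
  ring

theorem integral_Ioo_exp_neg_mul {k τ : ℝ} (hk : k ≠ 0) (hτ : 0 ≤ τ) :
    ∫ x in Ioo 0 τ, exp (-k * x) = (1 - exp (-k * τ)) / k := by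
  rw [← integral_Ioc_eq_integral_Ioo, ← intervalIntegral.integral_of_le hτ,
    integral_exp_neg_mul hk]

theorem integral_Ioi_exp_neg_mul {c : ℝ} (hc : 0 < c) :
    ∫ x in Ioi (0:ℝ), exp (-c * x) = 1 / c := by
  rw [integral_exp_mul_Ioi (neg_lt_zero.2 hc)]
  simp

theorem exp_neg_mul_le_one {s τ : ℝ} (hs : 0 ≤ s) (hτ : 0 ≤ τ) : exp (-s * τ) ≤ 1 :=
  exp_le_one_iff.2 (by nlinarith)

theorem abs_one_sub_exp_neg_mul_div_le {b τ : ℝ} (hb : 0 ≤ b) (hτ : 0 < τ) :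
    |(1 - exp (-b * τ)) / τ| ≤ b := by
  have hlow : 1 - b * τ ≤ exp (-b * τ) := by
    have := add_one_le_exp (-b * τ); linarith
  rw [abs_of_nonneg (div_nonneg (by linarith [exp_neg_mul_le_one hb hτ.le]) hτ.le),
    div_le_iff₀ hτ]
  linarith

theorem MeasureTheory.IntegrableOn.one_sub_exp_neg_mul_div_mul {g : ℝ → ℝ} {b : ℝ} (hb : 0 ≤ b)
    (hg : IntegrableOn g (Ioi 0)) :
    IntegrableOn (fun τ => (1 - exp (-b * τ)) / τ * g τ) (Ioi 0) := by
  refine hg.bdd_mul (c := b) (Measurable.aestronglyMeasurable (by fun_prop)) ?_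
  filter_upwards [ae_restrict_mem measurableSet_Ioi] with τ hτ
  exact abs_one_sub_exp_neg_mul_div_le hb hτ

theorem integral_Ioi_one_sub_exp_neg_mul_div_mul {g : ℝ → ℝ} {a : ℝ} (ha : 0 ≤ a)
    (hg : IntegrableOn g (Ioi 0)) :
    ∫ τ in Ioi 0, (1 - exp (-a * τ)) / τ * g τ =
      ∫ s in (0:ℝ)..a, ∫ τ in Ioi 0, exp (-s * τ) * g τ := by
  have hkernel : ∀ τ ∈ Ioi (0:ℝ),
      (1 - exp (-a * τ)) / τ * g τ = ∫ s in Ioc 0 a, exp (-s * τ) * g τ := by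
    intro τ hτ
    have hexp : ∫ s in (0:ℝ)..a, exp (-s * τ) = (1 - exp (-a * τ)) / τ := by
      simpa only [neg_mul, mul_comm τ] using integral_exp_neg_mul (ne_of_gt hτ) a
    rw [integral_mul_const, ← intervalIntegral.integral_of_le ha, hexp]
  rw [setIntegral_congr_fun measurableSet_Ioi hkernel, intervalIntegral.integral_of_le ha]
  refine integral_integral_swap ((hg.mul_prod (integrable_const (1:ℝ))).mono ?_ ?_)
  · have hexp_cont : Continuous fun z : ℝ × ℝ => exp (-z.2 * z.1) := by fun_prop
    exact hexp_cont.aestronglyMeasurable.mul hg.aestronglyMeasurable.comp_fst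
  · rw [Measure.prod_restrict]
    filter_upwards [ae_restrict_mem (measurableSet_Ioi.prod measurableSet_Ioc)] with z hz
    simp only [Function.uncurry, norm_mul, norm_eq_abs, abs_exp, mul_one]
    exact mul_le_of_le_one_left (abs_nonneg _) (exp_neg_mul_le_one hz.2.1.le hz.1.le)

-- Frullani's integral.
theorem integral_Ioi_one_sub_exp_neg_mul_div_mul_exp {b p : ℝ} (hb : 0 ≤ b) (hp : 0 < p) :
    ∫ τ in Ioi 0, (1 - exp (-b * τ)) / τ * exp (-p * τ) = log (b + p) - log p := by
  have hLaplace : ∀ s ∈ uIcc 0 b, ∫ τ in Ioi 0, exp (-s * τ) * exp (-p * τ) = 1 / (s + p) := by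
    intro s hs
    rw [uIcc_of_le hb] at hs
    simp_rw [← exp_add, ← add_mul, ← neg_add]
    exact integral_Ioi_exp_neg_mul (by linarith [hs.1])
  rw [integral_Ioi_one_sub_exp_neg_mul_div_mul hb (exp_neg_integrableOn_Ioi 0 hp),
    intervalIntegral.integral_congr hLaplace,
    intervalIntegral.integral_comp_add_right (fun x => 1 / x), zero_add,
    integral_one_div_of_pos hp (by linarith), log_div (by positivity) hp.ne']

theorem integral_log_add (q a : ℝ) :
    ∫ s in (0:ℝ)..a, log (s + q) = (a + q) * log (a + q) - q * log q - a := by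
  rw [intervalIntegral.integral_comp_add_right log, integral_log, zero_add]
  ring

theorem integral_Ioo_integral_Ioo_exp (c f : ℝ) {a b τ : ℝ} (ha : a ≠ 0) (hb : b ≠ 0)
    (hτ : 0 < τ) :
    ∫ τ₂ in Ioo 0 τ, ∫ τ₁ in Ioo 0 τ,
        (c / τ ^ 2) * exp (-a * τ₁) * exp (-b * τ₂) * exp (-f * τ) =
      c / (a * b) * ((1 - exp (-a * τ)) / τ * ((1 - exp (-b * τ)) / τ * exp (-f * τ))) := by
  simp_rw [integral_mul_const, integral_const_mul, integral_Ioo_exp_neg_mul ha hτ.le,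
    integral_Ioo_exp_neg_mul hb hτ.le]
  field_simp

theorem stmt_5 (c a b f : ℝ) (ha : 0 < a) (hb : 0 < b) (hf : 0 < f) :
    ∫ τ₃ in Set.Ioi (0:ℝ), ∫ τ₂ in Set.Ioo 0 τ₃, ∫ τ₁ in Set.Ioo 0 τ₃,
      (c / τ₃^2) * Real.exp (-a * τ₁) * Real.exp (-b * τ₂) * Real.exp (-f * τ₃)
      = (c / (a * b)) *
        (f * Real.log f - (a + f) * Real.log (a + f)
          - (b + f) * Real.log (b + f) + (a + b + f) * Real.log (a + b + f)) := by
  have hg : IntegrableOn (fun τ => (1 - exp (-b * τ)) / τ * exp (-f * τ)) (Ioi 0) :=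
    (exp_neg_integrableOn_Ioi 0 hf).one_sub_exp_neg_mul_div_mul hb.le
  have hFrullani : ∀ s ∈ uIcc 0 a,
      ∫ τ in Ioi 0, exp (-s * τ) * ((1 - exp (-b * τ)) / τ * exp (-f * τ)) =
        log (s + (b + f)) - log (s + f) := by
    intro s hs
    rw [uIcc_of_le ha.le] at hs
    have hshift : ∀ τ, exp (-s * τ) * ((1 - exp (-b * τ)) / τ * exp (-f * τ)) =
        (1 - exp (-b * τ)) / τ * exp (-(s + f) * τ) := fun τ => by
      rw [neg_add, add_mul, exp_add]; ring
    simp_rw [hshift]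
    rw [integral_Ioi_one_sub_exp_neg_mul_div_mul_exp hb.le (by linarith [hs.1]), add_left_comm]
  have hlog (q : ℝ) : IntervalIntegrable (fun s => log (s + q)) volume 0 a := by
    simpa using (intervalIntegral.intervalIntegrable_log' (a := q) (b := a + q)).comp_add_right q
  rw [setIntegral_congr_fun measurableSet_Ioi
      (fun τ hτ => integral_Ioo_integral_Ioo_exp c f ha.ne' hb.ne' hτ),
    integral_const_mul, integral_Ioi_one_sub_exp_neg_mul_div_mul ha.le hg,
    intervalIntegral.integral_congr hFrullani, intervalIntegral.integral_sub (hlog _) (hlog _),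
    integral_log_add, integral_log_add, ← add_assoc]
  ring
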